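/- There exists a constant c such that every binary string σ has an extension τ with |τ| − |σ| < 2^{c+|σ|} − 1 and K(τ) > |τ|. -/

import Mathlib

open scoped Classical ENNReal

/-- The first `n` bits of an infinite binary sequence. -/
def seg (X : ℕ → Bool) (n : ℕ) : List Bool := (List.range n).map X

/-- A computably enumerable predicate. -/
def CEPred {α : Type} [Primcodable α] (p : α → Prop) : Prop :=
  Partrec fun a => Part.assert (p a) fun _ => Part.some ()

/-- A set of strings is prefix-free. -/
def PrefixFreeSet (S : Set (List Bool)) : Prop :=
  ∀ p q, p ∈ S → q ∈ S → p <+: q → p = q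

/-- A prefix-free machine with outputs in `β`. -/
structure PFM (β : Type) [Primcodable β] where
  M : List Bool →. β
  comp : Partrec M
  pf : PrefixFreeSet {p | (M p).Dom}

/-- Kolmogorov complexity relative to a machine. -/
noncomputable def PFM.K {β : Type} [Primcodable β] (U : PFM β) (x : β) : ℕ :=
  sInf {n | ∃ p : List Bool, p.length = n ∧ x ∈ U.M p}

/-- An optimal (universal) prefix-free machine. -/
def PFM.Optimal {β : Type} [Primcodable β] (U : PFM β) : Prop :=
  (∀ x : β, ∃ p, x ∈ U.M p) ∧
  ∀ N : PFM β, ∃ c : ℕ, ∀ p x, x ∈ N.M p → ∃ q, x ∈ U.M q ∧ q.length ≤ p.length + c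

/-- The (chosen) shortest description of `x` on machine `U`. -/
noncomputable def PFM.star {β : Type} [Primcodable β] (U : PFM β)
    (h : ∀ x : β, ∃ p, x ∈ U.M p) (x : β) : List Bool :=
  Classical.choose (show ∃ p : List Bool, p.length = U.K x ∧ x ∈ U.M p from by
    have hne : {n | ∃ p : List Bool, p.length = n ∧ x ∈ U.M p}.Nonempty := by
      obtain ⟨p, hp⟩ := h x
      exact ⟨p.length, p, rfl, hp⟩
    exact Nat.sInf_mem hne)

/-- A conditional prefix-free machine: the first argument is the oracle (condition) string,
the second the program; it is prefix-free on programs for each fixed condition. -/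
structure CPFM (β : Type) [Primcodable β] where
  M : List Bool → List Bool →. β
  comp : Partrec₂ M
  pf : ∀ ρ, PrefixFreeSet {p | (M ρ p).Dom}

/-- Conditional Kolmogorov complexity `K(x | ρ)`. -/
noncomputable def CPFM.K {β : Type} [Primcodable β] (U : CPFM β) (ρ : List Bool) (x : β) : ℕ :=
  sInf {n | ∃ p : List Bool, p.length = n ∧ x ∈ U.M ρ p}

/-- An optimal conditional prefix-free machine. -/
def CPFM.Optimal {β : Type} [Primcodable β] (U : CPFM β) : Prop :=
  (∀ ρ (x : β), ∃ p, x ∈ U.M ρ p) ∧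
  ∀ N : CPFM β, ∃ c : ℕ, ∀ ρ p x, x ∈ N.M ρ p → ∃ q, x ∈ U.M ρ q ∧ q.length ≤ p.length + c

/-- A Martin-Löf test: a uniformly c.e. sequence of sets of strings generating open sets,
with the `n`-th level having total cylinder weight at most `2⁻ⁿ`. -/
structure MLTest where
  W : ℕ → Set (List Bool)
  ce : CEPred fun p : ℕ × List Bool => p.2 ∈ W p.1
  meas : ∀ n, (∑' σ : W n, ((2 : ℝ≥0∞))⁻¹ ^ (σ : List Bool).length) ≤ 2⁻¹ ^ n

/-- `X` is Martin-Löf random iff it passes every Martin-Löf test. -/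
def MLRandom (X : ℕ → Bool) : Prop :=
  ∀ T : MLTest, ∃ n, ∀ σ ∈ T.W n, seg X σ.length ≠ σ

/-- A Turing functional with oracle strings, inputs in ℕ and outputs in `β`:
computable and monotone (consistent) in the oracle. -/
structure TFun (β : Type) [Primcodable β] where
  φ : List Bool → ℕ →. β
  comp : Partrec₂ φ
  mono : ∀ ρ₀ ρ₁ : List Bool, ρ₀ <+: ρ₁ → ∀ n (y : β), y ∈ φ ρ₀ n → y ∈ φ ρ₁ n

/-- `Φ^X(n) = y`. -/
def TFun.evalOracle {β : Type} [Primcodable β] (Φ : TFun β) (X : ℕ → Bool) (n : ℕ) (y : β) :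
    Prop := ∃ s, y ∈ Φ.φ (seg X s) n

/-- `f` is computable from the oracle `X`. -/
def ComputableFrom {β : Type} [Primcodable β] (X : ℕ → Bool) (f : ℕ → β) : Prop :=
  ∃ Φ : TFun β, ∀ n, Φ.evalOracle X n (f n)

/-- The sequence `r` is pointedly `X`-computable. -/
def PointedlyComputable (X : ℕ → Bool) (r : ℕ → ℕ) : Prop :=
  StrictMono r ∧ ∃ Φ : TFun ℕ, ∀ n, r n ∈ Φ.φ (seg X (r n)) n

/-- The set `A` is computable from the oracle `X`. -/
def SetComputableFrom (X : ℕ → Bool) (A : ℕ → Prop) : Prop :=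
  ∃ Φ : TFun Bool, ∀ n, ∃ b, Φ.evalOracle X n b ∧ (b = true ↔ A n)

/-- The halting problem. -/
def HaltingSet (n : ℕ) : Prop :=
  ((Denumerable.ofNat Nat.Partrec.Code n).eval n).Dom

/-!
Shortest descriptions of distinct strings are distinct elements of the prefix-free domain of the
machine, so by the Kraft inequality `∑ 2^-K(τ) ≤ 1` over any finite set of strings. The
extensions of `σ` of lengths `|σ|, …, |σ| + 2^|σ|` have total weight `∑ 2^-|τ| = 1 + 2^-|σ| > 1`,
so one of them has `2^-|τ| > 2^-K(τ)`, i.e. `K(τ) > |τ|`.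
-/

open InformationTheory

theorem PrefixFreeSet.uniquelyDecodable {S : Set (List Bool)} (hS : PrefixFreeSet S)
    (hnil : [] ∉ S) : UniquelyDecodable S := by
  have flatten_eq_nil :
      ∀ L : List (List Bool), (∀ w ∈ L, w ∈ S) → L.flatten = [] → L = [] := by
    rintro (_ | ⟨w, L⟩) hL h
    · rfl
    · exact absurd (List.append_eq_nil_iff.1 h).1 (ne_of_mem_of_not_mem (hL w (by simp)) hnil)
  intro L₁
  induction L₁ with
  | nil => exact fun L₂ _ hL₂ h => (flatten_eq_nil L₂ hL₂ h.symm).symm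
  | cons w L₁ ih =>
    rintro (_ | ⟨w', L₂⟩) hL₁ hL₂ h
    · exact flatten_eq_nil _ hL₁ h
    simp only [List.flatten_cons] at h
    have hw : w ∈ S := hL₁ w (by simp)
    have hw' : w' ∈ S := hL₂ w' (by simp)
    have hww' : w = w' := by
      rcases List.prefix_or_prefix_of_prefix (h ▸ List.prefix_append w _)
        (List.prefix_append w' _) with hp | hp
      · exact hS w w' hw hw' hp
      · exact (hS w' w hw' hw hp).symm
    subst hww'
    rw [ih L₂ (fun v hv => hL₁ v (by simp [hv])) (fun v hv => hL₂ v (by simp [hv]))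
      (List.append_cancel_left h)]

theorem PrefixFreeSet.sum_le_one {S : Finset (List Bool)}
    (hS : PrefixFreeSet (S : Set (List Bool))) : ∑ p ∈ S, (1 / 2 : ℝ) ^ p.length ≤ 1 := by
  by_cases hnil : [] ∈ S
  · have : S = {[]} := Finset.eq_singleton_iff_unique_mem.2
      ⟨hnil, fun p hp => (hS _ _ hnil hp List.nil_prefix).symm⟩
    simp [this]
  · simpa using kraft_mcmillan_inequality (hS.uniquelyDecodable hnil)

theorem PFM.star_spec {β : Type} [Primcodable β] (U : PFM β) (h : ∀ x : β, ∃ p, x ∈ U.M p)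
    (x : β) : (U.star h x).length = U.K x ∧ x ∈ U.M (U.star h x) := by
  unfold PFM.star
  exact Classical.choose_spec (p := fun p : List Bool => p.length = U.K x ∧ x ∈ U.M p) _

theorem PFM.sum_K_le_one {β : Type} [Primcodable β] (U : PFM β)
    (h : ∀ x : β, ∃ p, x ∈ U.M p) (T : Finset β) : ∑ x ∈ T, (1 / 2 : ℝ) ^ U.K x ≤ 1 := by
  have star_injective : Function.Injective (U.star h) := fun x y hxy =>
    Part.mem_unique (U.star_spec h x).2 (hxy ▸ (U.star_spec h y).2)
  have hpf : PrefixFreeSet (T.image (U.star h) : Set (List Bool)) := fun p q hp hq =>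
    have dom : ∀ p ∈ (T.image (U.star h) : Set (List Bool)), (U.M p).Dom := by
      simp only [Finset.coe_image, Set.mem_image, Finset.mem_coe]
      rintro _ ⟨x, -, rfl⟩
      exact Part.dom_iff_mem.2 ⟨x, (U.star_spec h x).2⟩
    U.pf p q (dom p hp) (dom q hq)
  calc ∑ x ∈ T, (1 / 2 : ℝ) ^ U.K x
      = ∑ x ∈ T, (1 / 2 : ℝ) ^ (U.star h x).length := by simp only [U.star_spec h]
    _ = ∑ p ∈ T.image (U.star h), (1 / 2 : ℝ) ^ p.length :=
      (Finset.sum_image (f := fun p => (1 / 2 : ℝ) ^ p.length)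
        fun x _ y _ hxy => star_injective hxy).symm
    _ ≤ 1 := hpf.sum_le_one

theorem PFM.exists_length_lt_K_of_one_lt_sum (U : PFM (List Bool)) (h : ∀ x, ∃ p, x ∈ U.M p)
    (T : Finset (List Bool)) (hT : 1 < ∑ τ ∈ T, (1 / 2 : ℝ) ^ τ.length) :
    ∃ τ ∈ T, τ.length < U.K τ := by
  by_contra! hK
  refine (U.sum_K_le_one h T).not_gt (hT.trans_le (Finset.sum_le_sum fun τ hτ => ?_))
  exact pow_le_pow_of_le_one (by norm_num) (by norm_num) (hK τ hτ)

def extensions (σ : List Bool) (k : ℕ) : Finset (List Bool) :=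
  Finset.univ.image fun v : List.Vector Bool k => σ ++ v.toList

theorem mem_extensions {σ τ : List Bool} {k : ℕ} :
    τ ∈ extensions σ k ↔ σ <+: τ ∧ τ.length = σ.length + k := by
  simp only [extensions, Finset.mem_image, Finset.mem_univ, true_and]
  constructor
  · rintro ⟨v, rfl⟩
    simp
  · rintro ⟨⟨t, rfl⟩, hlen⟩
    exact ⟨⟨t, by simpa using hlen⟩, rfl⟩

theorem card_extensions (σ : List Bool) (k : ℕ) : (extensions σ k).card = 2 ^ k := by
  have append_injective : Function.Injective fun v : List.Vector Bool k => σ ++ v.toList :=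
    fun v w hvw => Subtype.ext (List.append_cancel_left hvw)
  rw [extensions, Finset.card_image_of_injective _ append_injective, Finset.card_univ,
    card_vector, Fintype.card_bool]

theorem sum_extensions (σ : List Bool) (k : ℕ) :
    ∑ τ ∈ extensions σ k, (1 / 2 : ℝ) ^ τ.length = (1 / 2) ^ σ.length := by
  rw [Finset.sum_congr rfl fun τ hτ => by rw [(mem_extensions.1 hτ).2], Finset.sum_const,
    card_extensions, nsmul_eq_mul, pow_add]
  push_cast
  rw [mul_left_comm, ← mul_pow]
  norm_num

theorem PFM.exists_extension_length_lt_K (U : PFM (List Bool)) (h : ∀ x, ∃ p, x ∈ U.M p)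
    (σ : List Bool) : ∃ k ≤ 2 ^ σ.length, ∃ τ ∈ extensions σ k, τ.length < U.K τ := by
  have disjoint : (Set.univ : Set ℕ).PairwiseDisjoint (extensions σ) :=
    fun k _ l _ hkl => Finset.disjoint_left.2 fun τ hk hl =>
      hkl (by have := (mem_extensions.1 hk).2.symm.trans (mem_extensions.1 hl).2; omega)
  have hsum : 1 < ∑ τ ∈ (Finset.range (2 ^ σ.length + 1)).biUnion (extensions σ),
      (1 / 2 : ℝ) ^ τ.length := by
    rw [Finset.sum_biUnion (disjoint.subset (Set.subset_univ _))]
    simp only [sum_extensions, Finset.sum_const, Finset.card_range, nsmul_eq_mul]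
    push_cast
    rw [add_mul, ← mul_pow]
    norm_num
  obtain ⟨τ, hτ, hK⟩ := U.exists_length_lt_K_of_one_lt_sum h _ hsum
  obtain ⟨k, hk, hτk⟩ := Finset.mem_biUnion.1 hτ
  exact ⟨k, Nat.lt_succ_iff.1 (Finset.mem_range.1 hk), τ, hτk, hK⟩

theorem stmt12 (U : PFM (List Bool)) (hU : U.Optimal) :
    ∃ c : ℕ, ∀ σ : List Bool, ∃ τ : List Bool, σ <+: τ ∧
      τ.length - σ.length < 2 ^ (c + σ.length) - 1 ∧ τ.length < U.K τ := by
  refine ⟨2, fun σ => ?_⟩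
  obtain ⟨k, hk, τ, hτ, hK⟩ := U.exists_extension_length_lt_K hU.1 σ
  obtain ⟨hpre, hlen⟩ := mem_extensions.1 hτ
  refine ⟨τ, hpre, ?_, hK⟩
  have : 1 ≤ 2 ^ σ.length := Nat.one_le_two_pow
  rw [hlen, Nat.add_sub_cancel_left, pow_add]
  omega
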